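/- (Lemma 3, global-pose aided VIO under pure translational straight-line motion.) Let R_GI and R_IC be real 3×3 rotation matrices, d, p_f, p₁, p_k, v₁, g ∈ ℝ³, δt ∈ ℝ, and let Φ₁₁, Φ₁₂, Φ₅₁, Φ₅₂, Φ₅₃, Φ₅₄ be arbitrary real 3×3 matrices. Assume the straight-line constraint: there exists q ∈ ℝ³ with q ×₃ d = 0 and p_k = p₁ + R_GI.mulVec q. Define N₁ with blocks (0, 0, 0, 0, 0, R_IC.mulVec d, −S(p_f − p₁).mulVec (R_GI.mulVec d)), Γ₁ = S(p_f − p₁ − δt•v₁ + (δt²/2)•g) * R_GI, Γ₂ = S(p_f − p_k) * R_GI * Φ₁₂ − Φ₅₂, Γ₃ = (δt²/2)•R_GI, Γ₄ = S(p_f − p_k) * R_GI * R_ICᵀ. Then all three block rows of the global-pose-aided observability block matrix annihilate N₁: (i) Γ₁.mulVec 0 + Γ₂.mulVec 0 + (−δt)•0 + Γ₃.mulVec 0 + (−1)•0 + Γ₄.mulVec (R_IC.mulVec d) − S(p_f − p₁).mulVec (R_GI.mulVec d) = 0; (ii) Φ₁₁.mulVec 0 + Φ₁₂.mulVec 0 =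 0; (iii) Φ₅₁.mulVec 0 + Φ₅₂.mulVec 0 + Φ₅₃.mulVec 0 + Φ₅₄.mulVec 0 + 0 = 0. Hence Ξ⁽ᵍ⁾ · N₁ = 0 where Ξ⁽ᵍ⁾ is the 3×7-block matrix with rows [Γ₁, Γ₂, −δt•1, Γ₃, −1, Γ₄, 1], [Φ₁₁, Φ₁₂, 0, 0, 0, 0, 0], [Φ₅₁, Φ₅₂, Φ₅₃, Φ₅₄, 1, 0, 0]. -/

import Mathlib

open Matrix

/-- The skew-symmetric (cross-product) matrix of a vector in ℝ³. -/
def skew (v : Fin 3 → ℝ) : Matrix (Fin 3) (Fin 3) ℝ :=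
  !![0, -v 2, v 1; v 2, 0, -v 0; -v 1, v 0, 0]

/-!
Only the sixth block of `N₁` is nonzero, so the second and third block rows vanish trivially,
and the first reduces (using `R_ICᵀ R_IC = 1`) to `S(p_f − p_k) R_GI d = S(p_f − p₁) R_GI d`.
Since `p_k − p₁ = R_GI q` with `q ∥ d`, the difference is `(R_GI q) × (R_GI d)`, which vanishes
because a linear map sends parallel vectors to parallel vectors.
-/

lemma skew_mulVec (v w : Fin 3 → ℝ) : (skew v).mulVec w = v ⨯₃ w := by
  funext i
  fin_cases i <;>
    simp [skew, Matrix.mulVec, dotProduct, cross_apply, Fin.sum_univ_three] <;> ring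

lemma map_cross_map_eq_zero {F : Type*} [Field F] (f : (Fin 3 → F) →ₗ[F] (Fin 3 → F))
    {u v : Fin 3 → F} (h : u ⨯₃ v = 0) : f u ⨯₃ f v = 0 := by
  contrapose! h
  rw [crossProduct_ne_zero_iff_linearIndependent] at h ⊢
  refine LinearIndependent.of_comp f ?_
  convert h using 1
  ext i
  fin_cases i <;> rfl

lemma sub_cross_mulVec_of_cross_eq_zero (R : Matrix (Fin 3) (Fin 3) ℝ) {q d : Fin 3 → ℝ}
    (hq : q ⨯₃ d = 0) (pf p₁ : Fin 3 → ℝ) :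
    (pf - (p₁ + R.mulVec q)) ⨯₃ R.mulVec d = (pf - p₁) ⨯₃ R.mulVec d := by
  have hRq : R.mulVec q ⨯₃ R.mulVec d = 0 := map_cross_map_eq_zero R.mulVecLin hq
  rw [← sub_sub, map_sub, LinearMap.sub_apply, hRq, sub_zero]

theorem lemma3_global_pose_vio_straight_line_general
    (R_GI R_IC : Matrix (Fin 3) (Fin 3) ℝ)
    (hIC : R_ICᵀ * R_IC = 1)
    (d pf p₁ pk v₁ g : Fin 3 → ℝ) (δt : ℝ)
    (Φ₁₁ Φ₁₂ Φ₅₁ Φ₅₂ Φ₅₃ Φ₅₄ : Matrix (Fin 3) (Fin 3) ℝ)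
    (hline : ∃ q : Fin 3 → ℝ, q ⨯₃ d = 0 ∧ pk = p₁ + R_GI.mulVec q) :
    ((skew (pf - p₁ - δt • v₁ + (δt ^ 2 / 2) • g) * R_GI).mulVec 0
        + (skew (pf - pk) * R_GI * Φ₁₂ - Φ₅₂).mulVec 0
        + (-δt) • (0 : Fin 3 → ℝ)
        + ((δt ^ 2 / 2) • R_GI).mulVec 0
        + (-1 : ℝ) • (0 : Fin 3 → ℝ)
        + (skew (pf - pk) * R_GI * R_ICᵀ).mulVec (R_IC.mulVec d)
        - (skew (pf - p₁)).mulVec (R_GI.mulVec d) = 0)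
    ∧ (Φ₁₁.mulVec 0 + Φ₁₂.mulVec 0 = 0)
    ∧ (Φ₅₁.mulVec 0 + Φ₅₂.mulVec 0 + Φ₅₃.mulVec 0 + Φ₅₄.mulVec 0
        + (0 : Fin 3 → ℝ) = 0) := by
  obtain ⟨q, hq, rfl⟩ := hline
  refine ⟨?_, by simp, by simp⟩
  have hICd : R_ICᵀ.mulVec (R_IC.mulVec d) = d := by
    rw [mulVec_mulVec, hIC, one_mulVec]
  simp only [mulVec_zero, smul_zero, zero_add, ← mulVec_mulVec, hICd, skew_mulVec,
    sub_cross_mulVec_of_cross_eq_zero R_GI hq, sub_self]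

/-- Lemma 3 (global-pose aided VIO under pure translational straight-line motion):
all three block rows of the global-pose-aided observability block matrix `Ξ⁽ᵍ⁾`
annihilate the candidate null direction
`N₁ = (0, 0, 0, 0, 0, R_IC d, −S(p_f − p₁) (R_GI d))`. -/
theorem lemma3_global_pose_vio_straight_line
    (R_GI R_IC : Matrix (Fin 3) (Fin 3) ℝ)
    (hGI : R_GIᵀ * R_GI = 1) (hGIdet : R_GI.det = 1)
    (hIC : R_ICᵀ * R_IC = 1) (hICdet : R_IC.det = 1)
    (d pf p₁ pk v₁ g : Fin 3 → ℝ) (δt : ℝ)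
    (Φ₁₁ Φ₁₂ Φ₅₁ Φ₅₂ Φ₅₃ Φ₅₄ : Matrix (Fin 3) (Fin 3) ℝ)
    (hline : ∃ q : Fin 3 → ℝ, q ⨯₃ d = 0 ∧ pk = p₁ + R_GI.mulVec q) :
    ((skew (pf - p₁ - δt • v₁ + (δt ^ 2 / 2) • g) * R_GI).mulVec 0
        + (skew (pf - pk) * R_GI * Φ₁₂ - Φ₅₂).mulVec 0
        + (-δt) • (0 : Fin 3 → ℝ)
        + ((δt ^ 2 / 2) • R_GI).mulVec 0
        + (-1 : ℝ) • (0 : Fin 3 → ℝ)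
        + (skew (pf - pk) * R_GI * R_ICᵀ).mulVec (R_IC.mulVec d)
        - (skew (pf - p₁)).mulVec (R_GI.mulVec d) = 0)
    ∧ (Φ₁₁.mulVec 0 + Φ₁₂.mulVec 0 = 0)
    ∧ (Φ₅₁.mulVec 0 + Φ₅₂.mulVec 0 + Φ₅₃.mulVec 0 + Φ₅₄.mulVec 0
        + (0 : Fin 3 → ℝ) = 0) :=
  lemma3_global_pose_vio_straight_line_general R_GI R_IC hIC d pf p₁ pk v₁ g δt Φ₁₁ Φ₁₂ Φ₅₁ Φ₅₂ Φ₅₃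
    Φ₅₄ hline
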